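/- Let r ∈ [n] with 2r ≤ n, and suppose στ = π where σ, τ ∈ T_r^n and π ∈ S_{2r} (i.e., π fixes every point outside [2r]). Then there exists δ ∈ C_{S_n}(π), the centralizer of π in S_n, such that σ^δ := δ⁻¹σδ and τ^δ := δ⁻¹τδ both lie in T_r^{2r} (i.e., both fix every point outside [2r]) and σ^δ τ^δ = π. -/

import Mathlib

/-!
Let `B = supp σ ∪ supp τ`, so `|B| ≤ 2r`, and let `K = [2r]`. Since `supp π ⊆ B ∩ K`, a permutation
`δ` that fixes `B ∩ K` pointwise is disjoint from `π`, hence commutes with it; and as `|B| ≤ |K|`,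
such a `δ` can be chosen to move `B` into `K` (trade the points of `B \ K` for points of `K \ B`
one swap at a time). Conjugating by `δ` then moves the supports of `σ` and `τ` into `K`.
-/

open Finset

def T (n r : ℕ) : Finset (Equiv.Perm (Fin n)) :=
  univ.filter fun σ => σ.support.card ≤ r

/-- `FixesOutside n m ρ` : ρ induces the identity outside [m], i.e. ρ ∈ S_{[m]}. -/
def FixesOutside (n m : ℕ) (ρ : Equiv.Perm (Fin n)) : Prop :=
  ∀ i : Fin n, ¬ ((i : ℕ) < m) → ρ i = i

namespace Equiv.Perm

theorem exists_mapsTo_of_card_le {α : Type*} [DecidableEq α] {B K : Finset α} (h : #B ≤ #K) :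
    ∃ δ : Perm α, (∀ x ∈ B ∩ K, δ x = x) ∧ Set.MapsTo δ B K := by
  induction hd : #(B \ K) generalizing B with
  | zero =>
    have hBK : B ⊆ K := sdiff_eq_empty_iff_subset.1 (card_eq_zero.1 hd)
    exact ⟨1, fun _ _ => rfl, fun _ hx => hBK hx⟩
  | succ d ih =>
    obtain ⟨x, hx⟩ : (B \ K).Nonempty := card_pos.1 (by omega)
    obtain ⟨y, hy⟩ : (K \ B).Nonempty :=
      card_pos.1 (by have := card_sdiff_le_card_sdiff_iff.2 h; omega)
    rw [mem_sdiff] at hx hy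
    have hy' : y ∉ B.erase x := fun h => hy.2 (mem_of_mem_erase h)
    obtain ⟨δ, hδfix, hδK⟩ := ih (B := insert y (B.erase x))
      (by rwa [card_insert_of_notMem hy', card_erase_add_one hx.1])
      (by rw [insert_sdiff_of_mem _ hy.1, erase_sdiff_comm, card_erase_of_mem (mem_sdiff.2 hx)]
          omega)
    refine ⟨δ * swap x y, fun z hz => ?_, fun z hz => ?_⟩
    · obtain ⟨hzB, hzK⟩ := mem_inter.1 hz
      have hzx : z ≠ x := by rintro rfl; exact hx.2 hzK
      have hzy : z ≠ y := by rintro rfl; exact hy.2 hzB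
      rw [mul_apply, swap_apply_of_ne_of_ne hzx hzy]
      exact hδfix z (mem_inter.2 ⟨mem_insert_of_mem (mem_erase.2 ⟨hzx, hzB⟩), hzK⟩)
    · apply hδK
      rcases eq_or_ne z x with rfl | hzx
      · simp
      · have hzy : z ≠ y := by rintro rfl; exact hy.2 hz
        rw [swap_apply_of_ne_of_ne hzx hzy]
        exact mem_insert_of_mem (mem_erase.2 ⟨hzx, hz⟩)

end Equiv.Perm

theorem fixesOutside_iff_support_subset {n m : ℕ} {ρ : Equiv.Perm (Fin n)} :
    FixesOutside n m ρ ↔ ρ.support ⊆ ({i | (i : ℕ) < m} : Finset (Fin n)) := by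
  simp [FixesOutside, subset_iff, not_imp_comm]

theorem conj_mem_T {n r : ℕ} {ρ : Equiv.Perm (Fin n)} (δ : Equiv.Perm (Fin n)) (h : ρ ∈ T n r) :
    δ * ρ * δ⁻¹ ∈ T n r := by
  simpa [T] using h

theorem conj_into_S2r_general (n r : ℕ) (h2r : 2 * r ≤ n)
    (σ τ π : Equiv.Perm (Fin n))
    (hσ : σ ∈ T n r) (hτ : τ ∈ T n r)
    (hπ : FixesOutside n (2 * r) π)
    (hmul : σ * τ = π) :
    ∃ δ : Equiv.Perm (Fin n), δ * π = π * δ ∧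
      (δ⁻¹ * σ * δ) ∈ T n r ∧ FixesOutside n (2 * r) (δ⁻¹ * σ * δ) ∧
      (δ⁻¹ * τ * δ) ∈ T n r ∧ FixesOutside n (2 * r) (δ⁻¹ * τ * δ) ∧
      (δ⁻¹ * σ * δ) * (δ⁻¹ * τ * δ) = π := by
  set B := σ.support ∪ τ.support
  set K : Finset (Fin n) := {i | (i : ℕ) < 2 * r}
  have hBK : #B ≤ #K := by
    have : #B ≤ #σ.support + #τ.support := card_union_le _ _
    simp only [T, mem_filter, mem_univ, true_and] at hσ hτ
    rw [Fin.card_filter_val_lt]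
    omega
  obtain ⟨δ, hδfix, hδK⟩ := Equiv.Perm.exists_mapsTo_of_card_le hBK
  have hπBK : π.support ⊆ B ∩ K :=
    subset_inter (hmul ▸ Equiv.Perm.support_mul_le σ τ) (fixesOutside_iff_support_subset.1 hπ)
  have hδπ : Commute δ π := Equiv.Perm.Disjoint.commute fun x =>
    (em (π x = x)).elim Or.inr fun hx => Or.inl (hδfix x (hπBK (Equiv.Perm.mem_support.2 hx)))
  have hconj : ∀ ρ : Equiv.Perm (Fin n), ρ.support ⊆ B → FixesOutside n (2 * r) (δ * ρ * δ⁻¹) := by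
    intro ρ hρ
    rw [fixesOutside_iff_support_subset, Equiv.Perm.support_conj]
    intro y hy
    obtain ⟨x, hx, rfl⟩ := mem_map.1 hy
    exact hδK (hρ hx)
  refine ⟨δ⁻¹, (hδπ.inv_left).eq, ?_⟩
  simp only [inv_inv]
  refine ⟨conj_mem_T δ hσ, hconj σ subset_union_left, conj_mem_T δ hτ,
    hconj τ subset_union_right, ?_⟩
  rw [← hδπ.mul_inv_cancel, ← hmul]
  group

/-- Lemma 3.1: if στ = π with σ,τ ∈ T_r^n and π ∈ S_{2r}, then there exists
δ ∈ C_{S_n}(π) with σ^δ, τ^δ ∈ T_r^{2r} and σ^δ τ^δ = π. -/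
theorem conj_into_S2r (n r : ℕ) (hr : 1 ≤ r) (h2r : 2 * r ≤ n)
    (σ τ π : Equiv.Perm (Fin n))
    (hσ : σ ∈ T n r) (hτ : τ ∈ T n r)
    (hπ : FixesOutside n (2 * r) π)
    (hmul : σ * τ = π) :
    ∃ δ : Equiv.Perm (Fin n), δ * π = π * δ ∧
      (δ⁻¹ * σ * δ) ∈ T n r ∧ FixesOutside n (2 * r) (δ⁻¹ * σ * δ) ∧
      (δ⁻¹ * τ * δ) ∈ T n r ∧ FixesOutside n (2 * r) (δ⁻¹ * τ * δ) ∧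
      (δ⁻¹ * σ * δ) * (δ⁻¹ * τ * δ) = π :=
  conj_into_S2r_general n r h2r σ τ π hσ hτ hπ hmul
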